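/- For jointly distributed finite random variables where the inputs X_1, …, X_n are conditionally independent given S, the set function h_2(A) := H(Y, Y_A | X_{A}, S) (entropy of a fixed output Y together with outputs indexed by A, conditioned on inputs indexed by A and S) is submodular in A ⊆ [1:n]. -/

import Mathlib

open scoped BigOperators

/-- Probability mass of `f ω = b` under the pmf `p` on the finite sample space `Ω`. -/
noncomputable def pdist {Ω β : Type*} [Fintype Ω] [DecidableEq β]
    (p : Ω → ℝ) (f : Ω → β) (b : β) : ℝ :=
  ∑ ω, if f ω = b then p ω else 0

/-- Shannon entropy of the finite-valued random variable `f` under the pmf `p`. -/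
noncomputable def entropy {Ω β : Type*} [Fintype Ω] [Fintype β] [DecidableEq β]
    (p : Ω → ℝ) (f : Ω → β) : ℝ :=
  -∑ b, pdist p f b * Real.log (pdist p f b)

/-- Conditional Shannon entropy `H(f | g)`. -/
noncomputable def condEntropy {Ω β γ : Type*} [Fintype Ω] [Fintype β] [DecidableEq β]
    [Fintype γ] [DecidableEq γ] (p : Ω → ℝ) (f : Ω → β) (g : Ω → γ) : ℝ :=
  entropy p (fun ω => (f ω, g ω)) - entropy p g

/-- Conditional mutual information `I(f ; g | h)`. -/
noncomputable def condMI {Ω β γ δ : Type*} [Fintype Ω] [Fintype β] [DecidableEq β]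
    [Fintype γ] [DecidableEq γ] [Fintype δ] [DecidableEq δ]
    (p : Ω → ℝ) (f : Ω → β) (g : Ω → γ) (h : Ω → δ) : ℝ :=
  condEntropy p f h + condEntropy p g h - condEntropy p (fun ω => (f ω, g ω)) h

/-- The tuple of random variables `{X i : i ∈ A}`, encoded as a masked vector. -/
def masked {Ω 𝒳 : Type*} {n : ℕ} (X : Fin n → Ω → 𝒳) (A : Finset (Fin n)) (ω : Ω) :
    Fin n → Option 𝒳 :=
  fun i => if i ∈ A then some (X i ω) else none

/-!
Write `h₂(A) = H(Y, S, Y_A, X_A) - H(S, X_A)`. For any family `Z` and any variable `W`, the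
defect `H(W, Z_A) + H(W, Z_B) - H(W, Z_{A ∪ B}) - H(W, Z_{A ∩ B})` is the conditional mutual
information `I(Z_{A \ B} ; Z_{B \ A} | W, Z_{A ∩ B})`. With `Zᵢ = (Yᵢ, Xᵢ)` and `W = (Y, S)` it is
nonnegative by Gibbs' inequality, so the first term of `h₂` is submodular; with `Z = X` and
`W = S` it vanishes by the conditional independence of the inputs, so the second term is modular.
-/

open Real

theorem sum_mul_log_div_nonneg {ι : Type*} [Fintype ι] {q r : ι → ℝ} (hq : ∀ i, 0 ≤ q i)
    (hr : ∀ i, 0 ≤ r i) (hqr : ∀ i, r i = 0 → q i = 0) (hsum : ∑ i, r i ≤ ∑ i, q i) :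
    0 ≤ ∑ i, q i * log (q i / r i) := by
  have hterm : ∀ i, q i - r i ≤ q i * log (q i / r i) := by
    intro i
    rcases (hq i).eq_or_lt with hq0 | hqpos
    · simp [← hq0, hr i]
    · have hrpos : 0 < r i := (hr i).lt_of_ne fun h => hqpos.ne' (hqr i h.symm)
      have hlog := one_sub_inv_le_log_of_pos (div_pos hqpos hrpos)
      rw [inv_div] at hlog
      calc q i - r i = q i * (1 - r i / q i) := by field_simp
        _ ≤ q i * log (q i / r i) := mul_le_mul_of_nonneg_left hlog hqpos.le
  calc (0 : ℝ) ≤ ∑ i, (q i - r i) := by rw [Finset.sum_sub_distrib]; linarith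
    _ ≤ ∑ i, q i * log (q i / r i) := Finset.sum_le_sum fun i _ => hterm i

theorem sum_mul_div_eq_of_sum_eq {β γ δ : Type*} [Fintype β] [Fintype γ] [Fintype δ]
    (a : β → δ → ℝ) (b : γ → δ → ℝ) (c : δ → ℝ) (ha : ∀ z, ∑ x, a x z = c z)
    (hb : ∀ z, ∑ y, b y z = c z) :
    ∑ t : β × γ × δ, a t.1 t.2.2 * b t.2.1 t.2.2 / c t.2.2 = ∑ z, c z := by
  calc ∑ t : β × γ × δ, a t.1 t.2.2 * b t.2.1 t.2.2 / c t.2.2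
      = ∑ x, ∑ z, ∑ y, a x z * b y z / c z := by
        simp only [Fintype.sum_prod_type]
        exact Finset.sum_congr rfl fun x _ => Finset.sum_comm
    _ = ∑ z, c z * c z / c z := by
        rw [Finset.sum_comm]
        simp only [← Finset.sum_div, ← Finset.sum_mul_sum, ha, hb]
    -- also when `c z = 0`, as `0 * 0 / 0 = 0`
    _ = ∑ z, c z := by simp only [mul_self_div_self]

section Entropy

variable {Ω β γ δ ι : Type*} [Fintype Ω] (p : Ω → ℝ)

theorem sum_pdist_mul [Fintype β] [DecidableEq β] (f : Ω → β) (G : β → ℝ) :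
    ∑ b, pdist p f b * G b = ∑ ω, p ω * G (f ω) := by
  simp only [pdist, Finset.sum_mul, ite_mul, zero_mul]
  rw [Finset.sum_comm]
  simp

theorem sum_pdist [Fintype β] [DecidableEq β] (f : Ω → β) : ∑ b, pdist p f b = ∑ ω, p ω := by
  simpa using sum_pdist_mul p f fun _ => 1

theorem sum_pdist_prod_fst [Fintype β] [DecidableEq β] [DecidableEq δ] (f : Ω → β) (h : Ω → δ)
    (z : δ) : ∑ x, pdist p (fun ω => (f ω, h ω)) (x, z) = pdist p h z := by
  unfold pdist
  rw [Finset.sum_comm]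
  refine Finset.sum_congr rfl fun ω _ => ?_
  simp [Prod.ext_iff, ite_and]

theorem pdist_nonneg [DecidableEq β] (hp0 : ∀ ω, 0 ≤ p ω) (f : Ω → β) (b : β) :
    0 ≤ pdist p f b :=
  Finset.sum_nonneg fun ω _ => by split_ifs; exacts [hp0 ω, le_rfl]

theorem pdist_le_pdist_comp [DecidableEq ι] [DecidableEq β] (hp0 : ∀ ω, 0 ≤ p ω) (F : Ω → ι)
    (φ : ι → β) (t : ι) : pdist p F t ≤ pdist p (fun ω => φ (F ω)) (φ t) :=
  Finset.sum_le_sum fun ω _ => by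
    by_cases h : F ω = t
    · simp [h]
    · rw [if_neg h]; split_ifs <;> simp [hp0 ω]

theorem entropy_eq_sum [Fintype β] [DecidableEq β] (f : Ω → β) :
    entropy p f = -∑ ω, p ω * log (pdist p f (f ω)) := by
  rw [entropy, sum_pdist_mul p f fun b => log (pdist p f b)]

theorem entropy_comp_eq_sum [Fintype ι] [DecidableEq ι] [Fintype β] [DecidableEq β] (F : Ω → ι)
    (φ : ι → β) :
    entropy p (fun ω => φ (F ω)) = -∑ t, pdist p F t * log (pdist p (fun ω => φ (F ω)) (φ t)) := by
  rw [entropy_eq_sum, sum_pdist_mul p F fun t => log (pdist p (fun ω => φ (F ω)) (φ t))]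

theorem entropy_of_comp_eq_of_comp [Fintype β] [DecidableEq β] [Fintype γ] [DecidableEq γ]
    (f : Ω → β) (g : Ω → γ) (u : β → γ) (v : γ → β) (hu : ∀ ω, u (f ω) = g ω)
    (hv : ∀ ω, v (g ω) = f ω) : entropy p f = entropy p g := by
  have hfiber : ∀ ω ω', f ω' = f ω ↔ g ω' = g ω := fun ω ω' =>
    ⟨fun h => by rw [← hu, ← hu, h], fun h => by rw [← hv, ← hv, h]⟩
  simp only [entropy_eq_sum, pdist, hfiber]

variable [Fintype β] [DecidableEq β] [Fintype γ] [DecidableEq γ] [Fintype δ] [DecidableEq δ]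

theorem condMI_eq_entropy (f : Ω → β) (g : Ω → γ) (h : Ω → δ) :
    condMI p f g h = entropy p (fun ω => (f ω, h ω)) + entropy p (fun ω => (g ω, h ω))
      - entropy p (fun ω => ((f ω, g ω), h ω)) - entropy p h := by
  unfold condMI condEntropy
  ring

theorem mul_log_div_div_eq {q a b c : ℝ} (hq : 0 ≤ q) (ha : q ≤ a) (hb : q ≤ b) (hc : q ≤ c) :
    q * log (q / (a * b / c)) = q * log q + q * log c - q * log a - q * log b := by
  rcases hq.eq_or_lt with rfl | hqpos
  · simp
  · have ha' : a ≠ 0 := (hqpos.trans_le ha).ne'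
    have hb' : b ≠ 0 := (hqpos.trans_le hb).ne'
    have hc' : c ≠ 0 := (hqpos.trans_le hc).ne'
    rw [log_div hqpos.ne' (by positivity), log_div (mul_ne_zero ha' hb') hc', log_mul ha' hb']
    ring

theorem condMI_nonneg (hp0 : ∀ ω, 0 ≤ p ω) (f : Ω → β) (g : Ω → γ) (h : Ω → δ) :
    0 ≤ condMI p f g h := by
  set F : Ω → β × γ × δ := fun ω => (f ω, g ω, h ω)
  set q : β × γ × δ → ℝ := pdist p F
  set a : β × γ × δ → ℝ := fun t => pdist p (fun ω => (f ω, h ω)) (t.1, t.2.2)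
  set b : β × γ × δ → ℝ := fun t => pdist p (fun ω => (g ω, h ω)) (t.2.1, t.2.2)
  set c : β × γ × δ → ℝ := fun t => pdist p h t.2.2
  have hqa : ∀ t, q t ≤ a t := pdist_le_pdist_comp p hp0 F fun t => (t.1, t.2.2)
  have hqb : ∀ t, q t ≤ b t := pdist_le_pdist_comp p hp0 F fun t => (t.2.1, t.2.2)
  have hqc : ∀ t, q t ≤ c t := pdist_le_pdist_comp p hp0 F fun t => t.2.2
  have hq0 : ∀ t, 0 ≤ q t := fun t => pdist_nonneg p hp0 F t
  have hassoc : entropy p (fun ω => ((f ω, g ω), h ω)) = entropy p F :=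
    entropy_of_comp_eq_of_comp p _ _ (fun s => (s.1.1, s.1.2, s.2)) (fun t => ((t.1, t.2.1), t.2.2))
      (fun _ => rfl) (fun _ => rfl)
  -- `a * b / c` is the law under which `f` and `g` are conditionally independent given `h`
  have hsum : condMI p f g h = ∑ t, q t * log (q t / (a t * b t / c t)) := by
    rw [condMI_eq_entropy, hassoc, entropy_comp_eq_sum p F fun t => (t.1, t.2.2),
      entropy_comp_eq_sum p F fun t => (t.2.1, t.2.2), entropy_comp_eq_sum p F fun t => t.2.2]
    simp only [mul_log_div_div_eq (hq0 _) (hqa _) (hqb _) (hqc _), Finset.sum_add_distrib,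
      Finset.sum_sub_distrib]
    unfold entropy
    ring
  have hmass : ∑ t, a t * b t / c t = ∑ t, q t := by
    rw [sum_pdist]
    exact (sum_mul_div_eq_of_sum_eq (fun x z => pdist p (fun ω => (f ω, h ω)) (x, z))
      (fun y z => pdist p (fun ω => (g ω, h ω)) (y, z)) (pdist p h) (sum_pdist_prod_fst p f h)
      (sum_pdist_prod_fst p g h)).trans (sum_pdist p h)
  rw [hsum]
  refine sum_mul_log_div_nonneg hq0 (fun t => ?_) (fun t ht => ?_) hmass.le
  · exact div_nonneg (mul_nonneg ((hq0 t).trans (hqa t)) ((hq0 t).trans (hqb t)))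
      ((hq0 t).trans (hqc t))
  · rcases div_eq_zero_iff.mp ht with hab | hc
    · rcases mul_eq_zero.mp hab with ha | hb
      · exact le_antisymm (ha ▸ hqa t) (hq0 t)
      · exact le_antisymm (hb ▸ hqb t) (hq0 t)
    · exact le_antisymm (hc ▸ hqc t) (hq0 t)

end Entropy

section Masked

variable {Ω α α' β γ : Type*} {n : ℕ}

theorem piecewise_masked (Z : Fin n → Ω → α) (A B : Finset (Fin n)) (ω : Ω) :
    A.piecewise (masked Z A ω) (masked Z B ω) = masked Z (A ∪ B) ω := by
  funext i
  by_cases hA : i ∈ A <;> simp [masked, hA]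

theorem piecewise_masked_of_subset (Z : Fin n → Ω → α) {A B : Finset (Fin n)} (hBA : B ⊆ A)
    (ω : Ω) : B.piecewise (masked Z A ω) (fun _ => none) = masked Z B ω := by
  funext i
  by_cases hB : i ∈ B
  · simp [masked, hB, hBA hB]
  · simp [masked, hB]

theorem map₂_masked (U : Fin n → Ω → α) (V : Fin n → Ω → α') (A : Finset (Fin n)) (ω : Ω) :
    (fun i => Option.map₂ Prod.mk (masked U A ω i) (masked V A ω i))
      = masked (fun i ω => (U i ω, V i ω)) A ω := by
  funext i
  by_cases hA : i ∈ A <;> simp [masked, hA]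

theorem map_masked (Z : Fin n → Ω → α) (φ : α → β) (A : Finset (Fin n)) (ω : Ω) :
    (fun i => (masked Z A ω i).map φ) = masked (fun i ω => φ (Z i ω)) A ω := by
  funext i
  by_cases hA : i ∈ A <;> simp [masked, hA]

variable [Fintype Ω] (p : Ω → ℝ) [Fintype α] [DecidableEq α] [Fintype γ] [DecidableEq γ]

theorem entropy_masked_union (Z : Fin n → Ω → α) (W : Ω → γ) (A B : Finset (Fin n)) :
    entropy p (fun ω => (masked Z A ω, W ω, masked Z B ω))
      = entropy p (fun ω => (W ω, masked Z (A ∪ B) ω)) :=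
  entropy_of_comp_eq_of_comp p _ _ (fun t => (t.2.1, A.piecewise t.1 t.2.2))
    (fun s => (A.piecewise s.2 fun _ => none, s.1, B.piecewise s.2 fun _ => none))
    (fun ω => by simp only [piecewise_masked])
    (fun ω => by
      simp only [piecewise_masked_of_subset Z Finset.subset_union_left,
        piecewise_masked_of_subset Z Finset.subset_union_right])

theorem entropy_masked_pair (Z : Fin n → Ω → α) (V : Ω → γ) (A B : Finset (Fin n)) :
    entropy p (fun ω => ((masked Z A ω, masked Z B ω), V ω))
      = entropy p (fun ω => (masked Z (A ∪ B) ω, V ω)) :=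
  entropy_of_comp_eq_of_comp p _ _ (fun t => (A.piecewise t.1.1 t.1.2, t.2))
    (fun s => ((A.piecewise s.1 fun _ => none, B.piecewise s.1 fun _ => none), s.2))
    (fun ω => by simp only [piecewise_masked])
    (fun ω => by
      simp only [piecewise_masked_of_subset Z Finset.subset_union_left,
        piecewise_masked_of_subset Z Finset.subset_union_right])

theorem condMI_masked_eq (Z : Fin n → Ω → α) (W : Ω → γ) (A B : Finset (Fin n)) :
    condMI p (masked Z (A \ B)) (masked Z (B \ A)) (fun ω => (W ω, masked Z (A ∩ B) ω))
      = entropy p (fun ω => (W ω, masked Z A ω)) + entropy p (fun ω => (W ω, masked Z B ω))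
        - entropy p (fun ω => (W ω, masked Z (A ∪ B) ω))
        - entropy p (fun ω => (W ω, masked Z (A ∩ B) ω)) := by
  have hB : B \ A ∪ A ∩ B = B := by rw [Finset.inter_comm, Finset.sdiff_union_inter]
  have hAB : A \ B ∪ B \ A ∪ A ∩ B = A ∪ B := by
    ext i
    simp only [Finset.mem_union, Finset.mem_sdiff, Finset.mem_inter]
    tauto
  rw [condMI_eq_entropy, entropy_masked_union, entropy_masked_union, entropy_masked_pair,
    entropy_masked_union, Finset.sdiff_union_inter, hB, hAB]

theorem entropy_masked_submodular (hp0 : ∀ ω, 0 ≤ p ω) (Z : Fin n → Ω → α) (W : Ω → γ)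
    (A B : Finset (Fin n)) :
    entropy p (fun ω => (W ω, masked Z (A ∪ B) ω)) + entropy p (fun ω => (W ω, masked Z (A ∩ B) ω))
      ≤ entropy p (fun ω => (W ω, masked Z A ω)) + entropy p (fun ω => (W ω, masked Z B ω)) := by
  linarith [condMI_masked_eq p Z W A B, condMI_nonneg p hp0 (masked Z (A \ B)) (masked Z (B \ A))
    (fun ω => (W ω, masked Z (A ∩ B) ω))]

theorem condEntropy_masked_eq [Fintype α'] [DecidableEq α'] [Fintype β] [DecidableEq β]
    (Y : Ω → β) (Ys : Fin n → Ω → α) (X : Fin n → Ω → α') (S : Ω → γ) (A : Finset (Fin n)) :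
    condEntropy p (fun ω => (Y ω, masked Ys A ω)) (fun ω => (masked X A ω, S ω))
      = entropy p (fun ω => ((Y ω, S ω), masked (fun i ω => (Ys i ω, X i ω)) A ω))
        - entropy p (fun ω => (S ω, masked X A ω)) := by
  rw [condEntropy]
  congr 1
  · exact entropy_of_comp_eq_of_comp p _ _
      (fun t => ((t.1.1, t.2.2), fun i => Option.map₂ Prod.mk (t.1.2 i) (t.2.1 i)))
      (fun s => ((s.1.1, fun i => (s.2 i).map Prod.fst), (fun i => (s.2 i).map Prod.snd, s.1.2)))
      (fun ω => by simp only [map₂_masked])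
      (fun ω => by simp only [map_masked])
  · exact entropy_of_comp_eq_of_comp p _ _ Prod.swap Prod.swap (fun _ => rfl) (fun _ => rfl)

end Masked

theorem independent_inputs_submodular_general {Ω 𝒳 𝒴 𝒮 : Type*} [Fintype Ω]
    [Fintype 𝒳] [DecidableEq 𝒳] [Fintype 𝒴] [DecidableEq 𝒴]
    [Fintype 𝒮] [DecidableEq 𝒮] {n : ℕ}
    (p : Ω → ℝ) (hp0 : ∀ ω, 0 ≤ p ω)
    (X : Fin n → Ω → 𝒳) (Ys : Fin n → Ω → 𝒴) (Y : Ω → 𝒴) (S : Ω → 𝒮)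
    (hindep : ∀ A₁ A₂ : Finset (Fin n),
      condMI p (masked X (A₁ \ A₂)) (masked X (A₂ \ A₁))
        (fun ω => (S ω, masked X (A₁ ∩ A₂) ω)) = 0) :
    ∀ A₁ A₂ : Finset (Fin n),
      condEntropy p (fun ω => (Y ω, masked Ys (A₁ ∪ A₂) ω))
          (fun ω => (masked X (A₁ ∪ A₂) ω, S ω))
        + condEntropy p (fun ω => (Y ω, masked Ys (A₁ ∩ A₂) ω))
          (fun ω => (masked X (A₁ ∩ A₂) ω, S ω))
      ≤ condEntropy p (fun ω => (Y ω, masked Ys A₁ ω)) (fun ω => (masked X A₁ ω, S ω))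
        + condEntropy p (fun ω => (Y ω, masked Ys A₂ ω)) (fun ω => (masked X A₂ ω, S ω)) := by
  intro A₁ A₂
  have houtputs := entropy_masked_submodular p hp0 (fun i ω => (Ys i ω, X i ω))
    (fun ω => (Y ω, S ω)) A₁ A₂
  have hinputs := condMI_masked_eq p X S A₁ A₂
  rw [hindep A₁ A₂] at hinputs
  simp only [condEntropy_masked_eq]
  linarith

/-- If the inputs `X₁,…,Xₙ` are conditionally independent given `S`, then the set
function `h₂(A) := H(Y, Y_A | X_A, S)` is submodular in `A ⊆ [1:n]`. -/
theorem independent_inputs_submodular {Ω 𝒳 𝒴 𝒮 : Type*} [Fintype Ω]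
    [Fintype 𝒳] [DecidableEq 𝒳] [Fintype 𝒴] [DecidableEq 𝒴]
    [Fintype 𝒮] [DecidableEq 𝒮] {n : ℕ}
    (p : Ω → ℝ) (hp0 : ∀ ω, 0 ≤ p ω) (hp1 : ∑ ω, p ω = 1)
    (X : Fin n → Ω → 𝒳) (Ys : Fin n → Ω → 𝒴) (Y : Ω → 𝒴) (S : Ω → 𝒮)
    (hindep : ∀ A₁ A₂ : Finset (Fin n),
      condMI p (masked X (A₁ \ A₂)) (masked X (A₂ \ A₁))
        (fun ω => (S ω, masked X (A₁ ∩ A₂) ω)) = 0) :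
    ∀ A₁ A₂ : Finset (Fin n),
      condEntropy p (fun ω => (Y ω, masked Ys (A₁ ∪ A₂) ω))
          (fun ω => (masked X (A₁ ∪ A₂) ω, S ω))
        + condEntropy p (fun ω => (Y ω, masked Ys (A₁ ∩ A₂) ω))
          (fun ω => (masked X (A₁ ∩ A₂) ω, S ω))
      ≤ condEntropy p (fun ω => (Y ω, masked Ys A₁ ω)) (fun ω => (masked X A₁ ω, S ω))
        + condEntropy p (fun ω => (Y ω, masked Ys A₂ ω)) (fun ω => (masked X A₂ ω, S ω)) :=
  independent_inputs_submodular_general p hp0 X Ys Y S hindep
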